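/- arXiv:2203.12661 — 10 statements merged into one kernel-verified Lean document; each statement's English description precedes it below -/
import Mathlib

section
/- Let ψx, ψy ∈ ℝ⁴ satisfy the 2D adjoint Euler relation Aᵀψx + Bᵀψy = 0. Then E_c·(u·ψx₁ + v·ψy₁) + H·u·(u·ψx₂ + v·ψy₂) + H·v·(u·ψx₃ + v·ψy₃) + H²·(u·ψx₄ + v·ψy₄) = 0. (This is the first ordinary differential equation satisfied by the adjoint Euler variables along streamtraces: E_c dψ₁/ds + H(u dψ₂/ds + v dψ₃/ds) + H² dψ₄/ds = 0.) -/
open Matrix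

/-- First streamtrace ODE for the 2D adjoint Euler equations:
given `Aᵀψx + Bᵀψy = 0`, one has
`E_c (u ψx₁ + v ψy₁) + H u (u ψx₂ + v ψy₂) + H v (u ψx₃ + v ψy₃) + H² (u ψx₄ + v ψy₄) = 0`. -/
theorem adjoint_euler_streamtrace_ode1
    (γ γ₁ u v H Ec : ℝ) (hγ : 1 < γ) (hγ₁ : γ₁ = γ - 1)
    (hEc : Ec = (u ^ 2 + v ^ 2) / 2)
    (AT BT : Matrix (Fin 4) (Fin 4) ℝ)
    (hAT : AT = !![0, γ₁ * Ec - u ^ 2, -(u * v), (γ₁ * Ec - H) * u;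
                   1, (3 - γ) * u, v, H - γ₁ * u ^ 2;
                   0, -(γ₁ * v), u, -(γ₁ * u * v);
                   0, γ₁, 0, γ * u])
    (hBT : BT = !![0, -(u * v), γ₁ * Ec - v ^ 2, (γ₁ * Ec - H) * v;
                   0, v, -(γ₁ * u), -(γ₁ * u * v);
                   1, u, (3 - γ) * v, H - γ₁ * v ^ 2;
                   0, 0, γ₁, γ * v])
    (ψx ψy : Fin 4 → ℝ)
    (hadj : AT.mulVec ψx + BT.mulVec ψy = 0) :
    Ec * (u * ψx 0 + v * ψy 0)
      + H * u * (u * ψx 1 + v * ψy 1)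
      + H * v * (u * ψx 2 + v * ψy 2)
      + H ^ 2 * (u * ψx 3 + v * ψy 3) = 0 := by
  subst hγ₁ hEc hAT hBT
  have h0 := congrFun hadj 0
  have h1 := congrFun hadj 1
  have h2 := congrFun hadj 2
  have h3 := congrFun hadj 3
  simp [Matrix.mulVec, dotProduct, Fin.sum_univ_four] at h0 h1 h2 h3
  linear_combination (2 * ((u ^ 2 + v ^ 2) / 2) - H) * h0
    + ((u ^ 2 + v ^ 2) / 2) * u * h1
    + ((u ^ 2 + v ^ 2) / 2) * v * h2
    + ((u ^ 2 + v ^ 2) / 2) * H * h3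
end

section
/- Let ψx, ψy ∈ ℝ⁴ satisfy the 2D adjoint Euler relation Aᵀψx + Bᵀψy = 0. Then (u·ψx₁ + v·ψy₁) + u·(u·ψx₂ + v·ψy₂) + v·(u·ψx₃ + v·ψy₃) + E_c·(u·ψx₄ + v·ψy₄) = 0. (This is the second ordinary differential equation satisfied by the adjoint Euler variables along streamtraces: dψ₁/ds + u dψ₂/ds + v dψ₃/ds + E_c dψ₄/ds = 0.) -/
open Matrix

theorem adjoint_euler_streamtrace_ode2
    (γ γ₁ u v H Ec : ℝ) (hγ : 1 < γ) (hγ₁ : γ₁ = γ - 1)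
    (hEc : Ec = (u ^ 2 + v ^ 2) / 2)
    
    (AT BT : Matrix (Fin 4) (Fin 4) ℝ)
    (hAT : AT = !![0, γ₁ * Ec - u ^ 2, -(u * v), (γ₁ * Ec - H) * u;
                   1, (3 - γ) * u, v, H - γ₁ * u ^ 2;
                   0, -(γ₁ * v), u, -(γ₁ * u * v);
                   0, γ₁, 0, γ * u])
    (hBT : BT = !![0, -(u * v), γ₁ * Ec - v ^ 2, (γ₁ * Ec - H) * v;
                   0, v, -(γ₁ * u), -(γ₁ * u * v);
                   1, u, (3 - γ) * v, H - γ₁ * v ^ 2;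
                   0, 0, γ₁, γ * v])
    (ψx ψy : Fin 4 → ℝ)
    (hadj : AT.mulVec ψx + BT.mulVec ψy = 0) :
    (u * ψx 0 + v * ψy 0)
      + u * (u * ψx 1 + v * ψy 1)
      + v * (u * ψx 2 + v * ψy 2)
      + Ec * (u * ψx 3 + v * ψy 3) = 0 := by
  subst hAT hBT hγ₁ hEc
  have h0 := congrFun hadj 0
  have h1 := congrFun hadj 1
  have h2 := congrFun hadj 2
  have h3 := congrFun hadj 3
  simp [Matrix.mulVec, dotProduct, Fin.sum_univ_four] at h0 h1 h2 h3
  nlinarith [h0, h1, h2, h3, mul_self_nonneg u, mul_self_nonneg v,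
    congrArg (· * u) h1, congrArg (· * v) h2]
end

section
/- Suppose u ≠ 0, v ≠ 0, c > 0, c² = γ₁(H − E_c), and let t be a real number satisfying the characteristic-slope equation (t·u − v)² = c²(1 + t²) with t·u − v ≠ 0 (so the direction (1, t) is tangent to a C⁺ or C⁻ characteristic). If ψx, ψy ∈ ℝ⁴ satisfy the 2D adjoint Euler relation Aᵀψx + Bᵀψy = 0, then (u + v·t)·(ψx₁ + t·ψy₁) + (u² + v²)·(ψx₂ + t·ψy₂) + t·(u² + v²)·(ψx₃ + t·ψy₃) + H·(u + v·t)·(ψx₄ + t·ψy₄) = 0. (This is the ordinary differential equation (u+vt) dψ₁/ds + (u²+v²)(dψ₂/ds + t dψ₃/ds) + H(u+vt) dψ₄/ds = 0 satisfied by the adjoint along the C⁺ and C⁻ characteristics.) -/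
open Matrix

theorem adjoint_euler_characteristic_ode
    (γ γ₁ u v H Ec : ℝ) (hγ : 1 < γ) (hγ₁ : γ₁ = γ - 1)
    (hEc : Ec = (u ^ 2 + v ^ 2) / 2)
    (c t : ℝ) (hu : u ≠ 0) (hv : v ≠ 0) (hc : 0 < c)
    (hc2 : c ^ 2 = γ₁ * (H - Ec))
    (ht : (t * u - v) ^ 2 = c ^ 2 * (1 + t ^ 2)) (htuv : t * u - v ≠ 0)
    (AT BT : Matrix (Fin 4) (Fin 4) ℝ)
    (hAT : AT = !![0, γ₁ * Ec - u ^ 2, -(u * v), (γ₁ * Ec - H) * u;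
                   1, (3 - γ) * u, v, H - γ₁ * u ^ 2;
                   0, -(γ₁ * v), u, -(γ₁ * u * v);
                   0, γ₁, 0, γ * u])
    (hBT : BT = !![0, -(u * v), γ₁ * Ec - v ^ 2, (γ₁ * Ec - H) * v;
                   0, v, -(γ₁ * u), -(γ₁ * u * v);
                   1, u, (3 - γ) * v, H - γ₁ * v ^ 2;
                   0, 0, γ₁, γ * v])
    (ψx ψy : Fin 4 → ℝ)
    (hadj : AT.mulVec ψx + BT.mulVec ψy = 0) :
    (u + v * t) * (ψx 0 + t * ψy 0)
      + (u ^ 2 + v ^ 2) * (ψx 1 + t * ψy 1)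
      + t * (u ^ 2 + v ^ 2) * (ψx 2 + t * ψy 2)
      + H * (u + v * t) * (ψx 3 + t * ψy 3) = 0 := by
  subst hγ₁ hEc hAT hBT
  have e0 := congrFun hadj 0
  have e1 := congrFun hadj 1
  have e2 := congrFun hadj 2
  have e3 := congrFun hadj 3
  simp [Matrix.mulVec, dotProduct, Fin.sum_univ_four] at e0 e1 e2 e3
  set Ec := (u ^ 2 + v ^ 2) / 2 with hEc
  linear_combination (1 + t ^ 2) * e0 + (u + v * t) * e1 + t * (u + v * t) * e2
    + (1 + t ^ 2) * (H - (γ - 1) * (H - Ec)) * e3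
    + ((2 - γ) * (ψx 1 + ψy 2) + (1 - γ) * (u * ψx 3 + v * ψy 3)) * ht
    + ((2 - γ) * (ψx 1 + ψy 2) + (1 - γ) * (u * ψx 3 + v * ψy 3)) * (1 + t ^ 2) * hc2
end

section
/- Let ψx, ψy, ψz ∈ ℝ⁵ satisfy the 3D adjoint Euler relation Aᵀψx + Bᵀψy + Cᵀψz = 0. Then, writing Dψᵢ = u·ψxᵢ + v·ψyᵢ + w·ψzᵢ for the derivative of ψᵢ in the streamtrace direction, one has E_c·Dψ₁ + H·u·Dψ₂ + H·v·Dψ₃ + H·w·Dψ₄ + H²·Dψ₅ = 0. (This is the first 3D streamtrace ordinary differential equation E_c dψ₁/ds + H(u dψ₂/ds + v dψ₃/ds + w dψ₄/ds) + H² dψ₅/ds = 0 for the adjoint Euler equations.) -/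
open Matrix

theorem adjoint_euler_3d_streamtrace_ode1
    (γ γ₁ u v w H Ec : ℝ) (hγ : 1 < γ) (hγ₁ : γ₁ = γ - 1)
    (hEc : Ec = (u ^ 2 + v ^ 2 + w ^ 2) / 2)
    (AT BT CT : Matrix (Fin 5) (Fin 5) ℝ)
    (hAT : AT = !![0, γ₁ * Ec - u ^ 2, -(u * v), -(u * w), (γ₁ * Ec - H) * u;
                   1, (3 - γ) * u, v, w, H - γ₁ * u ^ 2;
                   0, -(γ₁ * v), u, 0, -(γ₁ * u * v);
                   0, -(γ₁ * w), 0, u, -(γ₁ * u * w);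
                   0, γ₁, 0, 0, γ * u])
    (hBT : BT = !![0, -(u * v), γ₁ * Ec - v ^ 2, -(v * w), (γ₁ * Ec - H) * v;
                   0, v, -(γ₁ * u), 0, -(γ₁ * u * v);
                   1, u, (3 - γ) * v, w, H - γ₁ * v ^ 2;
                   0, 0, -(γ₁ * w), v, -(γ₁ * v * w);
                   0, 0, γ₁, 0, γ * v])
    (hCT : CT = !![0, -(u * w), -(v * w), γ₁ * Ec - w ^ 2, (γ₁ * Ec - H) * w;
                   0, w, 0, -(γ₁ * u), -(γ₁ * u * w);
                   0, 0, w, -(γ₁ * v), -(γ₁ * v * w);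
                   1, u, v, (3 - γ) * w, H - γ₁ * w ^ 2;
                   0, 0, 0, γ₁, γ * w])
    (ψx ψy ψz : Fin 5 → ℝ)
    (hadj : AT.mulVec ψx + BT.mulVec ψy + CT.mulVec ψz = 0) :
    Ec * (u * ψx 0 + v * ψy 0 + w * ψz 0)
      + H * u * (u * ψx 1 + v * ψy 1 + w * ψz 1)
      + H * v * (u * ψx 2 + v * ψy 2 + w * ψz 2)
      + H * w * (u * ψx 3 + v * ψy 3 + w * ψz 3)
      + H ^ 2 * (u * ψx 4 + v * ψy 4 + w * ψz 4) = 0 := by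
  subst hAT hBT hCT hγ₁ hEc
  have h0 := congrFun hadj 0
  have h1 := congrFun hadj 1
  have h2 := congrFun hadj 2
  have h3 := congrFun hadj 3
  have h4 := congrFun hadj 4
  simp [Matrix.mulVec, dotProduct, Fin.sum_univ_five] at h0 h1 h2 h3 h4
  set Ec : ℝ := (u ^ 2 + v ^ 2 + w ^ 2) / 2 with hE
  linear_combination (2 * Ec - H) * h0 + (Ec * u) * h1 + (Ec * v) * h2
    + (Ec * w) * h3 + (Ec * H) * h4
end

section
/- Let ψx, ψy, ψz ∈ ℝ⁵ satisfy the 3D adjoint Euler relation Aᵀψx + Bᵀψy + Cᵀψz = 0. Then, writing Dψᵢ = u·ψxᵢ + v·ψyᵢ + w·ψzᵢ for the derivative of ψᵢ in the streamtrace direction, one has Dψ₁ + u·Dψ₂ + v·Dψ₃ + w·Dψ₄ + E_c·Dψ₅ = 0. (This is the second 3D streamtrace ordinary differential equation dψ₁/ds + u dψ₂/ds + v dψ₃/ds + w dψ₄/ds + E_c dψ₅/ds = 0 for the adjoint Euler equations.) -/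
open Matrix

theorem adjoint_euler_3d_streamtrace_ode2
    (γ γ₁ u v w H Ec : ℝ) (hγ : 1 < γ) (hγ₁ : γ₁ = γ - 1)
    (hEc : Ec = (u ^ 2 + v ^ 2 + w ^ 2) / 2)
    (AT BT CT : Matrix (Fin 5) (Fin 5) ℝ)
    (hAT : AT = !![0, γ₁ * Ec - u ^ 2, -(u * v), -(u * w), (γ₁ * Ec - H) * u;
                   1, (3 - γ) * u, v, w, H - γ₁ * u ^ 2;
                   0, -(γ₁ * v), u, 0, -(γ₁ * u * v);
                   0, -(γ₁ * w), 0, u, -(γ₁ * u * w);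
                   0, γ₁, 0, 0, γ * u])
    (hBT : BT = !![0, -(u * v), γ₁ * Ec - v ^ 2, -(v * w), (γ₁ * Ec - H) * v;
                   0, v, -(γ₁ * u), 0, -(γ₁ * u * v);
                   1, u, (3 - γ) * v, w, H - γ₁ * v ^ 2;
                   0, 0, -(γ₁ * w), v, -(γ₁ * v * w);
                   0, 0, γ₁, 0, γ * v])
    (hCT : CT = !![0, -(u * w), -(v * w), γ₁ * Ec - w ^ 2, (γ₁ * Ec - H) * w;
                   0, w, 0, -(γ₁ * u), -(γ₁ * u * w);
                   0, 0, w, -(γ₁ * v), -(γ₁ * v * w);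
                   1, u, v, (3 - γ) * w, H - γ₁ * w ^ 2;
                   0, 0, 0, γ₁, γ * w])
    (ψx ψy ψz : Fin 5 → ℝ)
    (hadj : AT.mulVec ψx + BT.mulVec ψy + CT.mulVec ψz = 0) :
    (u * ψx 0 + v * ψy 0 + w * ψz 0)
      + u * (u * ψx 1 + v * ψy 1 + w * ψz 1)
      + v * (u * ψx 2 + v * ψy 2 + w * ψz 2)
      + w * (u * ψx 3 + v * ψy 3 + w * ψz 3)
      + Ec * (u * ψx 4 + v * ψy 4 + w * ψz 4) = 0 := by
  subst hAT hBT hCT hγ₁ hEc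
  have h0 := congrFun hadj 0
  have h1 := congrFun hadj 1
  have h2 := congrFun hadj 2
  have h3 := congrFun hadj 3
  have h4 := congrFun hadj 4
  simp [mulVec, dotProduct, Fin.sum_univ_five, Pi.add_apply] at h0 h1 h2 h3 h4
  linear_combination h0 + u * h1 + v * h2 + w * h3 + ((u ^ 2 + v ^ 2 + w ^ 2) / 2) * h4
end

section
/- Assume E_c = (u² + v²)/2, c ≥ 0 and c² = γ₁(H − E_c). Then for all real dx, dy, det(dy·A − dx·B) = (u·dy − v·dx)²·((u·dy − v·dx)² − c²·(dx² + dy²)); equivalently, det(dy·A − dx·B) = (u dy − v dx)²(u dy − v dx + c·ds)(u dy − v dx − c·ds) with ds = √(dx² + dy²). -/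
open Matrix
set_option maxHeartbeats 1600000 in

open Finset Function in
theorem my_det_fin_four {R : Type*} [CommRing R] (A : Matrix (Fin 4) (Fin 4) R) :
    det A =
      A 0 0 * (A 1 1 * A 2 2 * A 3 3 - A 1 1 * A 2 3 * A 3 2
        - A 1 2 * A 2 1 * A 3 3 + A 1 2 * A 2 3 * A 3 1
        + A 1 3 * A 2 1 * A 3 2 - A 1 3 * A 2 2 * A 3 1)
      - A 0 1 * (A 1 0 * A 2 2 * A 3 3 - A 1 0 * A 2 3 * A 3 2
        - A 1 2 * A 2 0 * A 3 3 + A 1 2 * A 2 3 * A 3 0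
        + A 1 3 * A 2 0 * A 3 2 - A 1 3 * A 2 2 * A 3 0)
      + A 0 2 * (A 1 0 * A 2 1 * A 3 3 - A 1 0 * A 2 3 * A 3 1
        - A 1 1 * A 2 0 * A 3 3 + A 1 1 * A 2 3 * A 3 0
        + A 1 3 * A 2 0 * A 3 1 - A 1 3 * A 2 1 * A 3 0)
      - A 0 3 * (A 1 0 * A 2 1 * A 3 2 - A 1 0 * A 2 2 * A 3 1
        - A 1 1 * A 2 0 * A 3 2 + A 1 1 * A 2 2 * A 3 0
        + A 1 2 * A 2 0 * A 3 1 - A 1 2 * A 2 1 * A 3 0) := by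
  rw [Matrix.det_succ_row_zero]
  simp only [Fin.sum_univ_succ, Fin.sum_univ_zero, Matrix.det_fin_three, submatrix_apply,
    Fin.succ_zero_eq_one, Fin.succ_one_eq_two, Fin.val_zero, Fin.val_succ, Fin.val_one,
    Fin.succAbove_zero, Fin.succ_succAbove_zero, Fin.succ_succAbove_one, id_eq,
    Fin.zero_succAbove]
  norm_num [Fin.succAbove, Fin.lt_def]
  simp only [show (Fin.succ 2 : Fin 4) = 3 from rfl, 
    show ((2 : Fin 3).castSucc = (2 : Fin 4)) from rfl]
  ring

/-- Determinant of the 2D characteristic matrix `dy·A − dx·B`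
(`A`, `B` the Euler flux Jacobians, transposes of `Aᵀ`, `Bᵀ`). -/
theorem euler_characteristic_determinant
    (γ γ₁ u v H Ec c : ℝ) (hγ : 1 < γ) (hγ₁ : γ₁ = γ - 1)
    (hEc : Ec = (u ^ 2 + v ^ 2) / 2) (hc : 0 ≤ c) (hc2 : c ^ 2 = γ₁ * (H - Ec))
    (AT BT : Matrix (Fin 4) (Fin 4) ℝ)
    (hAT : AT = !![0, γ₁ * Ec - u ^ 2, -(u * v), (γ₁ * Ec - H) * u;
                   1, (3 - γ) * u, v, H - γ₁ * u ^ 2;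
                   0, -(γ₁ * v), u, -(γ₁ * u * v);
                   0, γ₁, 0, γ * u])
    (hBT : BT = !![0, -(u * v), γ₁ * Ec - v ^ 2, (γ₁ * Ec - H) * v;
                   0, v, -(γ₁ * u), -(γ₁ * u * v);
                   1, u, (3 - γ) * v, H - γ₁ * v ^ 2;
                   0, 0, γ₁, γ * v]) :
    ∀ dx dy : ℝ,
      (dy • ATᵀ - dx • BTᵀ).det
        = (u * dy - v * dx) ^ 2 * ((u * dy - v * dx) ^ 2 - c ^ 2 * (dx ^ 2 + dy ^ 2))
      ∧ (dy • ATᵀ - dx • BTᵀ).det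
        = (u * dy - v * dx) ^ 2 * (u * dy - v * dx + c * Real.sqrt (dx ^ 2 + dy ^ 2))
            * (u * dy - v * dx - c * Real.sqrt (dx ^ 2 + dy ^ 2)) := by

  intro dx dy
  have hM : dy • ATᵀ - dx • BTᵀ =
      !![dy * (0) - dx * (0), dy * (1) - dx * (0), dy * (0) - dx * (1), dy * (0) - dx * (0);
         dy * (γ₁ * Ec - u ^ 2) - dx * (-(u * v)), dy * ((3 - γ) * u) - dx * (v), dy * (-(γ₁ * v)) - dx * (u), dy * (γ₁) - dx * (0);
         dy * (-(u * v)) - dx * (γ₁ * Ec - v ^ 2), dy * (v) - dx * (-(γ₁ * u)), dy * (u) - dx * ((3 - γ) * v), dy * (0) - dx * (γ₁);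
         dy * ((γ₁ * Ec - H) * u) - dx * ((γ₁ * Ec - H) * v), dy * (H - γ₁ * u ^ 2) - dx * (-(γ₁ * u * v)), dy * (-(γ₁ * u * v)) - dx * (H - γ₁ * v ^ 2), dy * (γ * u) - dx * (γ * v)] := by
    subst hAT hBT
    ext i j
    fin_cases i <;> fin_cases j <;>
      simp [Matrix.transpose_apply, Matrix.vecHead, Matrix.vecTail]
  have key : (dy • ATᵀ - dx • BTᵀ).det
      = (u * dy - v * dx) ^ 2 * ((u * dy - v * dx) ^ 2 - c ^ 2 * (dx ^ 2 + dy ^ 2)) := by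
    rw [hM, my_det_fin_four]
    simp only [Matrix.of_apply, Matrix.cons_val', Matrix.cons_val_zero, Matrix.cons_val_one,
      Matrix.head_cons, Matrix.head_fin_const, Matrix.empty_val', Matrix.cons_val_fin_one,
      Matrix.cons_val_two, Matrix.cons_val_three, Matrix.tail_cons]
    subst hγ₁ hEc
    linear_combination ((u * dy - v * dx) ^ 2 * (dx ^ 2 + dy ^ 2)) * hc2
  refine ⟨key, ?_⟩
  rw [key]
  have hs : Real.sqrt (dx ^ 2 + dy ^ 2) ^ 2 = dx ^ 2 + dy ^ 2 :=
    Real.sq_sqrt (by positivity)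
  linear_combination ((u * dy - v * dx) ^ 2 * c ^ 2) * hs
end

section
/- Let ψx, ψy ∈ ℝ⁴ satisfy the 2D adjoint Euler relation Aᵀψx + Bᵀψy = 0. Then u·ψx₁ + v·ψy₁ = H·(u·ψx₄ + v·ψy₄); that is, the streamwise derivative of the first adjoint component equals H times the streamwise derivative of the fourth adjoint component (the relation underlying the Giles–Pierce identity ψ₁ = Hψ₄). -/
open Matrix

theorem adjoint_euler_giles_pierce_streamwise
    (γ γ₁ u v H Ec : ℝ) (hγ : 1 < γ) (hγ₁ : γ₁ = γ - 1)
    (hEc : Ec = (u ^ 2 + v ^ 2) / 2)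
    
    (AT BT : Matrix (Fin 4) (Fin 4) ℝ)
    (hAT : AT = !![0, γ₁ * Ec - u ^ 2, -(u * v), (γ₁ * Ec - H) * u;
                   1, (3 - γ) * u, v, H - γ₁ * u ^ 2;
                   0, -(γ₁ * v), u, -(γ₁ * u * v);
                   0, γ₁, 0, γ * u])
    (hBT : BT = !![0, -(u * v), γ₁ * Ec - v ^ 2, (γ₁ * Ec - H) * v;
                   0, v, -(γ₁ * u), -(γ₁ * u * v);
                   1, u, (3 - γ) * v, H - γ₁ * v ^ 2;
                   0, 0, γ₁, γ * v])
    (ψx ψy : Fin 4 → ℝ)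
    (hadj : AT.mulVec ψx + BT.mulVec ψy = 0) :
    u * ψx 0 + v * ψy 0 = H * (u * ψx 3 + v * ψy 3) := by
  subst hAT hBT hγ₁ hEc
  have h0 := congrFun hadj 0
  have h1 := congrFun hadj 1
  have h2 := congrFun hadj 2
  simp [mulVec, dotProduct, Fin.sum_univ_four] at h0 h1 h2
  linear_combination 2 * h0 + u * h1 + v * h2
end

section
/- For any real t, the determinant of the 4×4 matrix with columns (−A₁, −B₁, −B₂ + t·A₂, −B₃ + t·A₃) equals γ₁·κ·(u + v·t), where κ = u·t − v. (This is the evaluation of the coefficient C¹₄ₓ = dx² dy · γ₁ κ (u + vt) in the characteristic analysis of the adjoint Euler equations.) -/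
open Matrix

/-!
The first two columns `−A₁`, `−B₁` are the negated unit vectors `−e₁`, `−e₂`, so the determinant
collapses to the `2 × 2` minor of the last two columns on rows `0` and `3`. In that minor the
`γ₁ E_c` terms cancel, and what remains factors as `γ₁ (u t − v) (u + v t)`.
-/

theorem det_of_cols_neg_single_one_neg_single_two {R : Type*} [CommRing R] (c d : Fin 4 → R) :
    (Matrix.of fun i j : Fin 4 => ![-Pi.single 1 1, -Pi.single 2 1, c, d] j i).det =
      c 0 * d 3 - c 3 * d 0 := by
  rw [← det_transpose]
  simp [det_succ_row_zero, Fin.sum_univ_succ, Fin.succAbove, Pi.single_apply]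
  ring

theorem adjoint_euler_coefficient_C14x_general
    (γ γ₁ u v H Ec : ℝ)
    (AT BT : Matrix (Fin 4) (Fin 4) ℝ)
    (hAT : AT = !![0, γ₁ * Ec - u ^ 2, -(u * v), (γ₁ * Ec - H) * u;
                   1, (3 - γ) * u, v, H - γ₁ * u ^ 2;
                   0, -(γ₁ * v), u, -(γ₁ * u * v);
                   0, γ₁, 0, γ * u])
    (hBT : BT = !![0, -(u * v), γ₁ * Ec - v ^ 2, (γ₁ * Ec - H) * v;
                   0, v, -(γ₁ * u), -(γ₁ * u * v);
                   1, u, (3 - γ) * v, H - γ₁ * v ^ 2;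
                   0, 0, γ₁, γ * v]) :
    ∀ t κ : ℝ, κ = u * t - v →
      (Matrix.of fun i j : Fin 4 =>
          ![(fun r : Fin 4 => -(AT r 0)),
            (fun r : Fin 4 => -(BT r 0)),
            (fun r : Fin 4 => -(BT r 1) + t * AT r 1),
            (fun r : Fin 4 => -(BT r 2) + t * AT r 2)] j i).det
        = γ₁ * κ * (u + v * t) := by
  rintro t κ rfl
  have hA₁ : (fun r => -(AT r 0)) = -Pi.single 1 1 := by
    ext r; fin_cases r <;> simp [hAT]
  have hB₁ : (fun r => -(BT r 0)) = -Pi.single 2 1 := by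
    ext r; fin_cases r <;> simp [hBT]
  rw [hA₁, hB₁, det_of_cols_neg_single_one_neg_single_two]
  simp only [hAT, hBT, Fin.isValue, of_apply, cons_val', cons_val_zero, cons_val_one, cons_val,
    cons_val_fin_one, neg_neg, mul_zero, add_zero, mul_neg, neg_zero, zero_add, neg_sub]
  ring

/-- The determinant of the 4×4 matrix whose columns are
`(−A₁, −B₁, −B₂ + t A₂, −B₃ + t A₃)` (with `Aᵢ`, `Bᵢ` the columns of `Aᵀ`, `Bᵀ`)
equals `γ₁ κ (u + v t)`, with `κ = u t − v`. -/
theorem adjoint_euler_coefficient_C14x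
    (γ γ₁ u v H Ec : ℝ) (hγ : 1 < γ) (hγ₁ : γ₁ = γ - 1)
    (hEc : Ec = (u ^ 2 + v ^ 2) / 2)
    (AT BT : Matrix (Fin 4) (Fin 4) ℝ)
    (hAT : AT = !![0, γ₁ * Ec - u ^ 2, -(u * v), (γ₁ * Ec - H) * u;
                   1, (3 - γ) * u, v, H - γ₁ * u ^ 2;
                   0, -(γ₁ * v), u, -(γ₁ * u * v);
                   0, γ₁, 0, γ * u])
    (hBT : BT = !![0, -(u * v), γ₁ * Ec - v ^ 2, (γ₁ * Ec - H) * v;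
                   0, v, -(γ₁ * u), -(γ₁ * u * v);
                   1, u, (3 - γ) * v, H - γ₁ * v ^ 2;
                   0, 0, γ₁, γ * v]) :
    ∀ t κ : ℝ, κ = u * t - v →
      (Matrix.of fun i j : Fin 4 =>
          ![(fun r : Fin 4 => -(AT r 0)),
            (fun r : Fin 4 => -(BT r 0)),
            (fun r : Fin 4 => -(BT r 1) + t * AT r 1),
            (fun r : Fin 4 => -(BT r 2) + t * AT r 2)] j i).det
        = γ₁ * κ * (u + v * t) :=
  adjoint_euler_coefficient_C14x_general γ γ₁ u v H Ec AT BT hAT hBT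
end

section
/- For any real t, the determinant of the 4×4 matrix with columns (−B₁ + t·A₁, −B₂ + t·A₂, −B₃ + t·A₃, −B₄) equals −κ·((γ₁ + γt²)·u²v − 2uv²t + γ₁·H·κ + (γ + γ₁t²)·v³ − γ₁·v·(1 + t²)·E_c), where κ = u·t − v. (This is the evaluation of the coefficient C⁴₄ₓ in the characteristic analysis of the adjoint Euler equations.) -/
open Matrix

theorem det_fin_four_of_col_zero {R : Type*} [CommRing R] (M : Matrix (Fin 4) (Fin 4) R)
    (h0 : M 0 0 = 0) (h3 : M 3 0 = 0) :
    M.det = -M 1 0 * !![M 0 1, M 0 2, M 0 3; M 2 1, M 2 2, M 2 3; M 3 1, M 3 2, M 3 3].det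
      + M 2 0 * !![M 0 1, M 0 2, M 0 3; M 1 1, M 1 2, M 1 3; M 3 1, M 3 2, M 3 3].det := by
  rw [det_succ_column_zero, Fin.sum_univ_four]
  simp [det_fin_three, Fin.succAbove, Fin.lt_def, h0, h3]

theorem adjoint_euler_coefficient_C44x_general
    (γ γ₁ u v H Ec : ℝ) (hγ₁ : γ₁ = γ - 1)
    (hEc : Ec = (u ^ 2 + v ^ 2) / 2)
    (AT BT : Matrix (Fin 4) (Fin 4) ℝ)
    (hAT : AT = !![0, γ₁ * Ec - u ^ 2, -(u * v), (γ₁ * Ec - H) * u;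
                   1, (3 - γ) * u, v, H - γ₁ * u ^ 2;
                   0, -(γ₁ * v), u, -(γ₁ * u * v);
                   0, γ₁, 0, γ * u])
    (hBT : BT = !![0, -(u * v), γ₁ * Ec - v ^ 2, (γ₁ * Ec - H) * v;
                   0, v, -(γ₁ * u), -(γ₁ * u * v);
                   1, u, (3 - γ) * v, H - γ₁ * v ^ 2;
                   0, 0, γ₁, γ * v]) :
    ∀ t κ : ℝ, κ = u * t - v →
      (Matrix.of fun i j : Fin 4 =>
          ![(fun r : Fin 4 => -(BT r 0) + t * AT r 0),
            (fun r : Fin 4 => -(BT r 1) + t * AT r 1),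
            (fun r : Fin 4 => -(BT r 2) + t * AT r 2),
            (fun r : Fin 4 => -(BT r 3))] j i).det
        = -κ * ((γ₁ + γ * t ^ 2) * u ^ 2 * v - 2 * u * v ^ 2 * t + γ₁ * H * κ
            + (γ + γ₁ * t ^ 2) * v ^ 3 - γ₁ * v * (1 + t ^ 2) * Ec) := by
  rintro t κ rfl
  subst hAT hBT hEc hγ₁
  -- the first column is `(0, t, -1, 0)`
  rw [det_fin_four_of_col_zero _ (by simp) (by simp), det_fin_three, det_fin_three]
  simp only [of_apply, cons_val', cons_val_zero, cons_val_one, cons_val, cons_val_fin_one]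
  ring

/-- The determinant of the 4×4 matrix whose columns are
`(−B₁ + t A₁, −B₂ + t A₂, −B₃ + t A₃, −B₄)` (with `Aᵢ`, `Bᵢ` the columns of `Aᵀ`, `Bᵀ`)
equals `−κ ((γ₁ + γt²)u²v − 2uv²t + γ₁Hκ + (γ + γ₁t²)v³ − γ₁v(1 + t²)E_c)`,
with `κ = u t − v`. -/
theorem adjoint_euler_coefficient_C44x
    (γ γ₁ u v H Ec : ℝ) (hγ : 1 < γ) (hγ₁ : γ₁ = γ - 1)
    (hEc : Ec = (u ^ 2 + v ^ 2) / 2)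
    (AT BT : Matrix (Fin 4) (Fin 4) ℝ)
    (hAT : AT = !![0, γ₁ * Ec - u ^ 2, -(u * v), (γ₁ * Ec - H) * u;
                   1, (3 - γ) * u, v, H - γ₁ * u ^ 2;
                   0, -(γ₁ * v), u, -(γ₁ * u * v);
                   0, γ₁, 0, γ * u])
    (hBT : BT = !![0, -(u * v), γ₁ * Ec - v ^ 2, (γ₁ * Ec - H) * v;
                   0, v, -(γ₁ * u), -(γ₁ * u * v);
                   1, u, (3 - γ) * v, H - γ₁ * v ^ 2;
                   0, 0, γ₁, γ * v]) :
    ∀ t κ : ℝ, κ = u * t - v →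
      (Matrix.of fun i j : Fin 4 =>
          ![(fun r : Fin 4 => -(BT r 0) + t * AT r 0),
            (fun r : Fin 4 => -(BT r 1) + t * AT r 1),
            (fun r : Fin 4 => -(BT r 2) + t * AT r 2),
            (fun r : Fin 4 => -(BT r 3))] j i).det
        = -κ * ((γ₁ + γ * t ^ 2) * u ^ 2 * v - 2 * u * v ^ 2 * t + γ₁ * H * κ
            + (γ + γ₁ * t ^ 2) * v ^ 3 - γ₁ * v * (1 + t ^ 2) * Ec) :=
  adjoint_euler_coefficient_C44x_general γ γ₁ u v H Ec hγ₁ hEc AT BT hAT hBT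
end

section
/- Let ρ ≠ 0, c > 0, let α, β be real angles, assume E_c = (u² + v²)/2, M² = (u² + v²)/c², H = E_c + c²/γ₁, and assume the null-eigenvalue relation u·sin(α − β) − v·cos(α − β) + c = 0. Define λ = (1/ρ)·(c·(1 + (γ₁/2)·M²), sin(α − β) − γ₁·u/c, −cos(α − β) − γ₁·v/c, γ₁/c) ∈ ℝ⁴. Then the dot products (1, u, v, E_c)·λ = 0 and (E_c, H·u, H·v, H²)·λ = 0 both hold. (These orthogonality relations show that the two streamtrace ODEs are automatically satisfied by the adjoint field ψ = φ_{α−β}(x sin(α−β) − y cos(α−β))·λ of a constant supersonic flow region.) -/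
open Matrix

/-!
Both dot products are multiples of the eigenvalue relation `L = u sin(α−β) − v cos(α−β) + c`:
`(1, u, v, E_c) · λ₀ = L` once `c² M² = u² + v²`, and `(E_c, Hu, Hv, H²) · λ₀ = H L` once moreover
`γ₁ (H − E_c) = c²`. Hence both vanish on the characteristic direction `α − β`.
-/

section LeftNullVector

variable {K : Type*} [Field K] [CharZero K]

/-- `λ₀` with `s, k` standing for `sin (α − β), cos (α − β)`, before scaling by `1 / ρ`. -/
def leftNullVector (γ₁ u v c s k M : K) : Fin 4 → K :=
  ![c * (1 + γ₁ / 2 * M ^ 2), s - γ₁ * u / c, -k - γ₁ * v / c, γ₁ / c]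

theorem massRow_dotProduct_leftNullVector {γ₁ u v c s k M : K} (hc : c ≠ 0)
    (hM : M ^ 2 = (u ^ 2 + v ^ 2) / c ^ 2) :
    ![1, u, v, (u ^ 2 + v ^ 2) / 2] ⬝ᵥ leftNullVector γ₁ u v c s k M = u * s - v * k + c := by
  simp only [leftNullVector, dotProduct, Fin.sum_univ_four, cons_val, hM]
  field_simp
  ring

theorem enthalpyRow_dotProduct_leftNullVector {γ₁ u v c s k M H : K} (hc : c ≠ 0)
    (hγ₁ : γ₁ ≠ 0) (hM : M ^ 2 = (u ^ 2 + v ^ 2) / c ^ 2)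
    (hH : H = (u ^ 2 + v ^ 2) / 2 + c ^ 2 / γ₁) :
    ![(u ^ 2 + v ^ 2) / 2, H * u, H * v, H ^ 2] ⬝ᵥ leftNullVector γ₁ u v c s k M =
      H * (u * s - v * k + c) := by
  simp only [leftNullVector, dotProduct, Fin.sum_univ_four, cons_val, hM, hH]
  field_simp
  ring

end LeftNullVector

theorem streamtrace_ode_orthogonal_to_left_eigenvector_general
    (γ γ₁ u v ρ c α β Ec M H : ℝ) (hγ : 1 < γ) (hγ₁ : γ₁ = γ - 1)
    (hc : 0 < c)
    (hEc : Ec = (u ^ 2 + v ^ 2) / 2)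
    (hM : M ^ 2 = (u ^ 2 + v ^ 2) / c ^ 2)
    (hH : H = Ec + c ^ 2 / γ₁)
    (heig : u * Real.sin (α - β) - v * Real.cos (α - β) + c = 0)
    (lam : Fin 4 → ℝ)
    (hlam : lam = (1 / ρ) • ![c * (1 + γ₁ / 2 * M ^ 2),
                              Real.sin (α - β) - γ₁ * u / c,
                              -Real.cos (α - β) - γ₁ * v / c,
                              γ₁ / c]) :
    ![1, u, v, Ec] ⬝ᵥ lam = 0 ∧ ![Ec, H * u, H * v, H ^ 2] ⬝ᵥ lam = 0 := by
  have hγ₁0 : γ₁ ≠ 0 := by rw [hγ₁]; exact sub_ne_zero.mpr hγ.ne'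
  subst hlam hEc
  change _ ⬝ᵥ (1 / ρ) • leftNullVector γ₁ u v c _ _ M = 0 ∧
    _ ⬝ᵥ (1 / ρ) • leftNullVector γ₁ u v c _ _ M = 0
  simp only [dotProduct_smul, massRow_dotProduct_leftNullVector hc.ne' hM,
    enthalpyRow_dotProduct_leftNullVector hc.ne' hγ₁0 hM hH, heig, mul_zero, smul_zero, and_self]

/-- Orthogonality of the streamtrace-ODE coefficient vectors `(1, u, v, E_c)` and
`(E_c, Hu, Hv, H²)` with the left null eigenvector `λ₀^{α−β}` of the constant
supersonic-flow adjoint field. -/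
theorem streamtrace_ode_orthogonal_to_left_eigenvector
    (γ γ₁ u v ρ c α β Ec M H : ℝ) (hγ : 1 < γ) (hγ₁ : γ₁ = γ - 1)
    (hρ : ρ ≠ 0) (hc : 0 < c)
    (hEc : Ec = (u ^ 2 + v ^ 2) / 2)
    (hM : M ^ 2 = (u ^ 2 + v ^ 2) / c ^ 2)
    (hH : H = Ec + c ^ 2 / γ₁)
    (heig : u * Real.sin (α - β) - v * Real.cos (α - β) + c = 0)
    (lam : Fin 4 → ℝ)
    (hlam : lam = (1 / ρ) • ![c * (1 + γ₁ / 2 * M ^ 2),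
                              Real.sin (α - β) - γ₁ * u / c,
                              -Real.cos (α - β) - γ₁ * v / c,
                              γ₁ / c]) :
    ![1, u, v, Ec] ⬝ᵥ lam = 0 ∧ ![Ec, H * u, H * v, H ^ 2] ⬝ᵥ lam = 0 :=
  streamtrace_ode_orthogonal_to_left_eigenvector_general γ γ₁ u v ρ c α β Ec M H hγ hγ₁ hc hEc hM hH
    heig lam hlam
end
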